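/- arXiv:1511.02790 — 3 statements merged into one kernel-verified Lean document; each statement's English description precedes it below -/
import Mathlib

section
/- Let d ≥ 1, m > 0 and p > 0. Then the moment sum Σ_{x∈ℤ^d} |x|^p G_x(m²) is finite, where G_x(m²) is the massive lattice Green function. (This is the finiteness needed for the correlation length of order p of the non-interacting model to be well-defined for every m > 0.) -/
open MeasureTheory

/-- Euclidean norm of a lattice point `x ∈ ℤ^d`. -/
noncomputable def eNormZ {d : ℕ} (x : Fin d → ℤ) : ℝ := Real.sqrt (∑ i, ((x i : ℝ)) ^ 2)

/-- The massive lattice Green function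
`G_x(m²) = (2π)^{-d} ∫_{[-π,π]^d} cos(k·x) / (m² + Σᵢ 2(1 - cos kᵢ)) dk`. -/
noncomputable def latticeGreen (d : ℕ) (m2 : ℝ) (x : Fin d → ℤ) : ℝ :=
  (1 / (2 * Real.pi) ^ d) *
    ∫ k in Set.univ.pi fun _ : Fin d => Set.Icc (-Real.pi) Real.pi,
      Real.cos (∑ i, k i * (x i : ℝ)) / (m2 + ∑ i, 2 * (1 - Real.cos (k i)))

/-!
Write the denominator as `m² + Σᵢ 2(1 - cos kᵢ) = Q - S(k)` with `Q = m² + 4d` and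
`S(k) = Σᵢ (2 + 2 cos kᵢ) ∈ [0, 4d]`. Multiplying `cos (k·x)` by `S` averages it over the nearest
neighbours of `x`, so `∫ cos (k·x) S(k)ⁿ dk = 0` as long as `n < |x|₁`. Expanding `1 / (Q - S)` as
a geometric series up to order `|x|₁` therefore leaves only the remainder, which gives
`|G_x(m²)| ≤ r^|x|₁ / m²` with `r = 4d / Q < 1`. Against this exponential decay the polynomial
weight `|x|^p ≤ ∏ᵢ (1 + |xᵢ|)^⌈p⌉` is harmless, and the resulting product of one-dimensional
summable weights is summable over `ℤ^d`.
-/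

namespace LatticeGreen

open Real Set

variable {d : ℕ}

lemma one_div_sub_eq_sum_add {K : Type*} [Field K] {Q S : K} (hQ : Q ≠ 0) (hQS : Q - S ≠ 0)
    (L : ℕ) :
    1 / (Q - S) = ∑ n ∈ Finset.range L, S ^ n / Q ^ (n + 1) + (S / Q) ^ L / (Q - S) := by
  induction L with
  | zero => simp
  | succ L ih =>
    rw [ih, Finset.sum_range_succ, add_assoc]
    congr 1
    rw [div_pow, div_pow]
    field_simp
    ring

lemma sum_le_prod_one_add {ι : Type*} (s : Finset ι) {a : ι → ℝ} (ha : ∀ i ∈ s, 0 ≤ a i) :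
    ∑ i ∈ s, a i ≤ ∏ i ∈ s, (1 + a i) := by
  classical
  induction s using Finset.induction_on with
  | empty => simp
  | insert j s hj ih =>
    rw [Finset.sum_insert hj, Finset.prod_insert hj]
    have ha' : ∀ i ∈ s, 0 ≤ a i := fun i hi => ha i (Finset.mem_insert_of_mem hi)
    have hsum := ih ha'
    have hprod : 1 ≤ ∏ i ∈ s, (1 + a i) :=
      Finset.one_le_prod fun i hi => le_add_of_nonneg_right (ha' i hi)
    nlinarith [ha j (Finset.mem_insert_self j s)]

lemma summable_one_add_natAbs_pow_mul_pow {r : ℝ} (hr0 : 0 ≤ r) (hr1 : r < 1) (K : ℕ) :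
    Summable fun z : ℤ => (1 + z.natAbs : ℝ) ^ K * r ^ z.natAbs := by
  have hnat : Summable fun n : ℕ => (1 + n : ℝ) ^ K * r ^ n := by
    have hr : ‖r‖ < 1 := by rwa [Real.norm_of_nonneg hr0]
    simp_rw [add_comm (1 : ℝ), add_pow, one_pow, mul_one, Finset.sum_mul]
    exact summable_sum fun j _ =>
      ((summable_pow_mul_geometric_of_norm_lt_one j hr).mul_right (K.choose j : ℝ)).congr
        fun n => by ring
  exact .of_nat_of_neg (by simpa using hnat) (by simpa using hnat)

lemma summable_fin_prod_of_nonneg {α : Type*} {g : α → ℝ} (hg : Summable g) (hg0 : 0 ≤ g) :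
    ∀ n, Summable fun x : Fin n → α => ∏ i, g (x i)
  | 0 => .of_finite
  | n + 1 => by
    refine ((Fin.consEquiv fun _ => α).summable_iff).mp ?_
    refine (hg.mul_of_nonneg (summable_fin_prod_of_nonneg hg hg0 n) hg0
      fun x => Finset.prod_nonneg fun i _ => hg0 (x i)).congr fun q => ?_
    simp [Fin.prod_univ_succ]

def brillouinZone (d : ℕ) : Set (Fin d → ℝ) := univ.pi fun _ => Icc (-π) π

lemma isCompact_brillouinZone : IsCompact (brillouinZone d) :=
  isCompact_univ_pi fun _ => isCompact_Icc

lemma measureReal_brillouinZone : volume.real (brillouinZone d) = (2 * π) ^ d := by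
  rw [measureReal_def, brillouinZone, volume_pi_pi]
  simp [Real.volume_Icc, two_mul, pi_nonneg]

lemma integrableOn_brillouinZone {f : (Fin d → ℝ) → ℝ} (hf : Continuous f) :
    IntegrableOn f (brillouinZone d) :=
  hf.continuousOn.integrableOn_compact isCompact_brillouinZone

def phase (k : Fin d → ℝ) (x : Fin d → ℤ) : ℝ := ∑ i, k i * x i

@[fun_prop]
lemma continuous_phase (x : Fin d → ℤ) : Continuous fun k => phase k x := by
  unfold phase; fun_prop

lemma phase_add_single (k : Fin d → ℝ) (x : Fin d → ℤ) (i : Fin d) (c : ℤ) :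
    phase k (x + Pi.single i c) = phase k x + c * k i := by
  simp [phase, mul_add, Finset.sum_add_distrib, Pi.single_apply, mul_comm]

lemma integral_Icc_exp_int_mul_I {n : ℤ} (hn : n ≠ 0) :
    ∫ t in Icc (-π) π, Complex.exp (n * Complex.I * t) = 0 := by
  have hnI : (n : ℂ) * Complex.I ≠ 0 := by simp [hn]
  rw [integral_Icc_eq_integral_Ioc, ← intervalIntegral.integral_of_le (by linarith [pi_pos]),
    integral_exp_mul_complex hnI, div_eq_zero_iff, sub_eq_zero]
  left
  rw [Complex.exp_eq_exp_iff_exists_int]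
  exact ⟨n, by push_cast; ring⟩

lemma integral_brillouinZone_cos_phase_eq_zero {x : Fin d → ℤ} (hx : x ≠ 0) :
    ∫ k in brillouinZone d, cos (phase k x) = 0 := by
  set F : (Fin d → ℝ) → ℂ := fun k => ∏ i, Complex.exp (x i * Complex.I * k i)
  have hcos : ∀ k, cos (phase k x) = RCLike.re (F k) := fun k => by
    simp only [F, phase]
    rw [RCLike.re_eq_complex_re, ← Complex.exp_ofReal_mul_I_re, ← Complex.exp_sum]
    push_cast
    rw [Finset.sum_mul]
    congr 3
    ext i
    ring
  have hF : ∫ k in brillouinZone d, F k = 0 := by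
    obtain ⟨j, hj⟩ := Function.ne_iff.mp hx
    rw [brillouinZone, volume_pi, Measure.restrict_pi_pi,
      integral_fintype_prod_eq_prod fun i (t : ℝ) => Complex.exp (x i * Complex.I * t)]
    exact Finset.prod_eq_zero (Finset.mem_univ j) (integral_Icc_exp_int_mul_I hj)
  have hFint : IntegrableOn F (brillouinZone d) :=
    (by fun_prop : Continuous F).continuousOn.integrableOn_compact isCompact_brillouinZone
  simp_rw [hcos]
  rw [integral_re hFint, hF, map_zero]

noncomputable def shiftSymbol (k : Fin d → ℝ) : ℝ := ∑ i, (2 + 2 * cos (k i))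

@[fun_prop]
lemma continuous_shiftSymbol : Continuous (shiftSymbol (d := d)) := by
  unfold shiftSymbol; fun_prop

lemma shiftSymbol_nonneg (k : Fin d → ℝ) : 0 ≤ shiftSymbol k :=
  Finset.sum_nonneg fun i _ => by linarith [neg_one_le_cos (k i)]

lemma shiftSymbol_le (k : Fin d → ℝ) : shiftSymbol k ≤ 4 * d := by
  have := Finset.sum_le_card_nsmul Finset.univ (fun i => 2 + 2 * cos (k i)) 4
    fun i _ => by linarith [cos_le_one (k i)]
  simpa [shiftSymbol, mul_comm] using this

lemma sum_two_mul_one_sub_cos (k : Fin d → ℝ) :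
    ∑ i, 2 * (1 - cos (k i)) = 4 * d - shiftSymbol k := by
  rw [eq_sub_iff_add_eq, shiftSymbol, ← Finset.sum_add_distrib]
  simp_rw [show ∀ i, 2 * (1 - cos (k i)) + (2 + 2 * cos (k i)) = 4 from fun i => by ring]
  simp [mul_comm]

def l1Norm (x : Fin d → ℤ) : ℕ := ∑ i, (x i).natAbs

lemma l1Norm_le_l1Norm_add_single (x : Fin d → ℤ) (i : Fin d) (c : ℤ) :
    l1Norm x ≤ l1Norm (x + Pi.single i c) + c.natAbs := by
  calc l1Norm x
      ≤ ∑ j, (((x + Pi.single i c : Fin d → ℤ) j).natAbs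
          + ((Pi.single i c : Fin d → ℤ) j).natAbs) :=
        Finset.sum_le_sum fun j _ => le_of_eq_of_le (by simp) (Int.natAbs_sub_le _ _)
    _ = l1Norm (x + Pi.single i c) + c.natAbs := by
      have hsingle : ∑ j, ((Pi.single i c : Fin d → ℤ) j).natAbs = c.natAbs := by
        rw [Finset.sum_eq_single i (fun j _ hj => by simp [hj]) (by simp)]
        simp
      rw [Finset.sum_add_distrib, hsingle, l1Norm]

lemma cos_phase_mul_shiftSymbol (k : Fin d → ℝ) (x : Fin d → ℤ) :
    cos (phase k x) * shiftSymbol k = ∑ i, (2 * cos (phase k x)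
      + cos (phase k (x + Pi.single i 1)) + cos (phase k (x + Pi.single i (-1)))) := by
  rw [shiftSymbol, Finset.mul_sum]
  refine Finset.sum_congr rfl fun i _ => ?_
  simp only [phase_add_single, Int.cast_one, Int.cast_neg, one_mul, neg_one_mul,
    ← sub_eq_add_neg, cos_add, cos_sub]
  ring

lemma integral_cos_phase_mul_shiftSymbol_pow_eq_zero {n : ℕ} {x : Fin d → ℤ}
    (hn : n < l1Norm x) :
    ∫ k in brillouinZone d, cos (phase k x) * shiftSymbol k ^ n = 0 := by
  induction n generalizing x with
  | zero =>
    simp only [pow_zero, mul_one]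
    refine integral_brillouinZone_cos_phase_eq_zero fun hx => ?_
    simp [hx, l1Norm] at hn
  | succ n ih =>
    have hint (y : Fin d → ℤ) :
        IntegrableOn (fun k => cos (phase k y) * shiftSymbol k ^ n) (brillouinZone d) :=
      integrableOn_brillouinZone (by fun_prop)
    have hneighbour (i : Fin d) {c : ℤ} (hc : c.natAbs = 1) :
        ∫ k in brillouinZone d, cos (phase k (x + Pi.single i c)) * shiftSymbol k ^ n = 0 :=
      ih (by have := l1Norm_le_l1Norm_add_single x i c; omega)
    calc ∫ k in brillouinZone d, cos (phase k x) * shiftSymbol k ^ (n + 1)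
        = ∫ k in brillouinZone d, ∑ i, (2 * (cos (phase k x) * shiftSymbol k ^ n)
            + cos (phase k (x + Pi.single i 1)) * shiftSymbol k ^ n
            + cos (phase k (x + Pi.single i (-1))) * shiftSymbol k ^ n) := by
          congr 1 with k
          rw [pow_succ', ← mul_assoc, cos_phase_mul_shiftSymbol, Finset.sum_mul]
          exact Finset.sum_congr rfl fun i _ => by ring
      _ = ∑ i, (2 * (∫ k in brillouinZone d, cos (phase k x) * shiftSymbol k ^ n)
            + (∫ k in brillouinZone d, cos (phase k (x + Pi.single i 1)) * shiftSymbol k ^ n)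
            + ∫ k in brillouinZone d,
                cos (phase k (x + Pi.single i (-1))) * shiftSymbol k ^ n) := by
          rw [integral_finsetSum]
          · refine Finset.sum_congr rfl fun i _ => ?_
            rw [integral_add ?_ (hint _), integral_add ?_ (hint _), integral_const_mul]
            · exact (hint x).const_mul 2
            · exact ((hint x).const_mul 2).add (hint _)
          · exact fun i _ => (((hint x).const_mul 2).add (hint _)).add (hint _)
      _ = 0 := by simp [ih (by omega : n < l1Norm x), hneighbour]

lemma integral_cos_phase_div_eq_remainder {m2 : ℝ} (hm2 : 0 < m2) (x : Fin d → ℤ) :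
    ∫ k in brillouinZone d, cos (phase k x) / (m2 + ∑ i, 2 * (1 - cos (k i))) =
      ∫ k in brillouinZone d, cos (phase k x) *
        ((shiftSymbol k / (m2 + 4 * d)) ^ l1Norm x / (m2 + 4 * d - shiftSymbol k)) := by
  set Q := m2 + 4 * d
  have hQ : 0 < Q := by positivity
  have hgap (k : Fin d → ℝ) : Q - shiftSymbol k ≠ 0 := by linarith [shiftSymbol_le k]
  have hexpand (k : Fin d → ℝ) :
      cos (phase k x) / (m2 + ∑ i, 2 * (1 - cos (k i))) =
        ∑ n ∈ Finset.range (l1Norm x), cos (phase k x) * shiftSymbol k ^ n / Q ^ (n + 1) +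
          cos (phase k x) * ((shiftSymbol k / Q) ^ l1Norm x / (Q - shiftSymbol k)) := by
    rw [sum_two_mul_one_sub_cos, ← add_sub_assoc, div_eq_mul_one_div,
      one_div_sub_eq_sum_add hQ.ne' (hgap k) (l1Norm x), mul_add, Finset.mul_sum]
    simp only [mul_div_assoc]
  simp_rw [hexpand]
  rw [integral_add, integral_finsetSum]
  · refine add_eq_right.mpr (Finset.sum_eq_zero fun n hn => ?_)
    rw [integral_div, integral_cos_phase_mul_shiftSymbol_pow_eq_zero (Finset.mem_range.mp hn),
      zero_div]
  · exact fun n _ => integrableOn_brillouinZone (by fun_prop)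
  · exact integrable_finsetSum _ fun n _ => integrableOn_brillouinZone (by fun_prop)
  · exact integrableOn_brillouinZone (by fun_prop (disch := exact hgap _))

lemma abs_latticeGreen_le {m2 : ℝ} (hm2 : 0 < m2) (x : Fin d → ℤ) :
    |latticeGreen d m2 x| ≤ (4 * d / (m2 + 4 * d)) ^ l1Norm x / m2 := by
  set Q := m2 + 4 * d
  set r := 4 * d / Q
  have hQ : 0 < Q := by positivity
  have hremainder : ∀ k ∈ brillouinZone d,
      ‖cos (phase k x) * ((shiftSymbol k / Q) ^ l1Norm x / (Q - shiftSymbol k))‖ ≤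
        r ^ l1Norm x / m2 := fun k _ => by
    have hgap : m2 ≤ Q - shiftSymbol k := by linarith [shiftSymbol_le k]
    have hS0 : 0 ≤ shiftSymbol k / Q := div_nonneg (shiftSymbol_nonneg k) hQ.le
    have hfactor : 0 ≤ (shiftSymbol k / Q) ^ l1Norm x / (Q - shiftSymbol k) :=
      div_nonneg (pow_nonneg hS0 _) (hm2.le.trans hgap)
    rw [Real.norm_eq_abs, abs_mul, abs_of_nonneg hfactor, ← one_mul (_ / m2)]
    gcongr
    exacts [abs_cos_le_one _, div_le_div_of_nonneg_right (shiftSymbol_le k) hQ.le]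
  have hintegral := norm_setIntegral_le_of_norm_le_const
    (isCompact_brillouinZone.measure_lt_top (μ := volume)) hremainder
  rw [measureReal_brillouinZone, ← integral_cos_phase_div_eq_remainder hm2, Real.norm_eq_abs]
    at hintegral
  rw [latticeGreen, abs_mul, abs_of_pos (by positivity)]
  calc 1 / (2 * π) ^ d *
        |∫ k in brillouinZone d, cos (phase k x) / (m2 + ∑ i, 2 * (1 - cos (k i)))|
      ≤ 1 / (2 * π) ^ d * (r ^ l1Norm x / m2 * (2 * π) ^ d) := by gcongr
    _ = r ^ l1Norm x / m2 := by field_simp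

lemma eNormZ_le_l1Norm (x : Fin d → ℤ) : eNormZ x ≤ l1Norm x := by
  rw [eNormZ, l1Norm, Real.sqrt_le_left (by positivity)]
  push_cast
  simp_rw [Nat.cast_natAbs, Int.cast_abs, ← sq_abs (x _ : ℝ)]
  exact Finset.sum_sq_le_sq_sum_of_nonneg fun i _ => abs_nonneg _

lemma rpow_eNormZ_le_prod {p : ℝ} (hp : 0 ≤ p) (x : Fin d → ℤ) :
    eNormZ x ^ p ≤ ∏ i, (1 + (x i).natAbs : ℝ) ^ ⌈p⌉₊ := by
  have hP : eNormZ x ≤ ∏ i, (1 + (x i).natAbs : ℝ) := by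
    refine (eNormZ_le_l1Norm x).trans ?_
    rw [l1Norm, Nat.cast_sum]
    exact sum_le_prod_one_add _ fun i _ => Nat.cast_nonneg _
  have hP1 : 1 ≤ ∏ i, (1 + (x i).natAbs : ℝ) :=
    Finset.one_le_prod fun i _ => le_add_of_nonneg_right (Nat.cast_nonneg _)
  calc eNormZ x ^ p ≤ (∏ i, (1 + (x i).natAbs : ℝ)) ^ p :=
        rpow_le_rpow (sqrt_nonneg _) hP hp
    _ ≤ (∏ i, (1 + (x i).natAbs : ℝ)) ^ (⌈p⌉₊ : ℝ) :=
        rpow_le_rpow_of_exponent_le hP1 (Nat.le_ceil p)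
    _ = ∏ i, (1 + (x i).natAbs : ℝ) ^ ⌈p⌉₊ := by rw [rpow_natCast, Finset.prod_pow]

end LatticeGreen

open LatticeGreen in
theorem free_green_moment_summable_general (d : ℕ) (m : ℝ) (hm : 0 < m)
    (p : ℝ) (hp : 0 < p) :
    Summable (fun x : Fin d → ℤ => eNormZ x ^ p * latticeGreen d (m ^ 2) x) := by
  set r := 4 * d / (m ^ 2 + 4 * d)
  have hr0 : 0 ≤ r := by positivity
  have hr1 : r < 1 := (div_lt_one (by positivity)).mpr (by linarith [pow_pos hm 2])
  set g : ℤ → ℝ := fun z => (1 + z.natAbs : ℝ) ^ ⌈p⌉₊ * r ^ z.natAbs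
  have hg : Summable fun x : Fin d → ℤ => ∏ i, g (x i) :=
    summable_fin_prod_of_nonneg (summable_one_add_natAbs_pow_mul_pow hr0 hr1 _)
      (fun z => by positivity) d
  refine Summable.of_norm_bounded (hg.div_const (m ^ 2)) fun x => ?_
  have hweight : 0 ≤ eNormZ x ^ p := Real.rpow_nonneg (Real.sqrt_nonneg _) p
  calc ‖eNormZ x ^ p * latticeGreen d (m ^ 2) x‖
      = eNormZ x ^ p * |latticeGreen d (m ^ 2) x| := by
        rw [norm_mul, Real.norm_of_nonneg hweight, Real.norm_eq_abs]
    _ ≤ (∏ i, (1 + (x i).natAbs : ℝ) ^ ⌈p⌉₊) * (r ^ l1Norm x / m ^ 2) := by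
        gcongr
        exacts [rpow_eNormZ_le_prod hp.le x, abs_latticeGreen_le (by positivity) x]
    _ = (∏ i, g (x i)) / m ^ 2 := by
        rw [l1Norm, ← Finset.prod_pow_eq_pow_sum, mul_div_assoc', Finset.prod_mul_distrib]

/-- For every `d ≥ 1`, `m > 0`, `p > 0`, the moment sum `Σ_{x∈ℤ^d} |x|^p G_x(m²)`
is finite (summable). -/
theorem free_green_moment_summable (d : ℕ) (hd : 1 ≤ d) (m : ℝ) (hm : 0 < m)
    (p : ℝ) (hp : 0 < p) :
    Summable (fun x : Fin d → ℤ => eNormZ x ^ p * latticeGreen d (m ^ 2) x) :=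
  free_green_moment_summable_general d m hm p hp
end

section
/- Let L > 1 be real, let a, s satisfy 2s > a > 0, let b ≥ 0, let δ ≥ 0 satisfy (1+δ)^b L^{−a} < 1, let K ≥ 1, and let j_m ∈ ℕ. Let (g_j)_{j≥1} be a sequence of positive reals such that g_j ≤ (1+δ) g_{j+1} for all j ≥ 1, and g_j ≤ K g_{j_m} for all j ≥ j_m. Then there is a constant C = C(L, a, b, s, δ, K), independent of j_m and of the sequence, such that Σ_{j=1}^∞ L^{a j − 2s (j − j_m)_+} g_j^b ≤ C · L^{a j_m} g_{j_m}^b, where (t)_+ = max(t, 0). (This is the mass-scale summation lemma, with the two properties of the renormalisation-group coupling sequence ḡ that its proof uses taken as hypotheses.) -/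
/-- Mass-scale summation lemma: if the positive sequence `g` satisfies
`g_j ≤ (1+δ) g_{j+1}` for `j ≥ 1` and `g_j ≤ K g_{j_m}` for `j ≥ j_m`, then
`Σ_{j=1}^∞ L^{a j - 2s (j - j_m)_+} g_j^b ≤ C L^{a j_m} g_{j_m}^b`,
with `C` depending only on `L, a, b, s, δ, K`. -/
theorem mass_scale_summation (L a b s δ K : ℝ) (hL : 1 < L) (ha : 0 < a) (has : a < 2 * s)
    (hb : 0 ≤ b) (hδ : 0 ≤ δ) (hδL : (1 + δ) ^ b * L ^ (-a) < 1) (hK : 1 ≤ K) :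
    ∃ C > 0, ∀ (jm : ℕ) (g : ℕ → ℝ),
      (∀ j : ℕ, 1 ≤ j → 0 < g j) →
      (∀ j : ℕ, 1 ≤ j → g j ≤ (1 + δ) * g (j + 1)) →
      (∀ j : ℕ, jm ≤ j → g j ≤ K * g jm) →
      Summable (fun j : ℕ =>
        L ^ (a * ((j : ℝ) + 1) - 2 * s * max (((j : ℝ) + 1) - (jm : ℝ)) 0) * g (j + 1) ^ b) ∧
      (∑' j : ℕ,
          L ^ (a * ((j : ℝ) + 1) - 2 * s * max (((j : ℝ) + 1) - (jm : ℝ)) 0) * g (j + 1) ^ b)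
        ≤ C * L ^ (a * (jm : ℝ)) * g jm ^ b := by
  have hL0 : (0:ℝ) < L := by linarith
  have hδ1 : (0:ℝ) < 1 + δ := by linarith
  have hK0 : (0:ℝ) < K := by linarith
  set q : ℝ := (1 + δ) ^ b * L ^ (-a) with hqdef
  set r : ℝ := L ^ (a - 2 * s) with hrdef
  have hq0 : 0 < q := mul_pos (Real.rpow_pos_of_pos hδ1 b) (Real.rpow_pos_of_pos hL0 _)
  have hq1 : q < 1 := hδL
  have hr0 : 0 < r := Real.rpow_pos_of_pos hL0 _
  have hr1 : r < 1 := Real.rpow_lt_one_of_one_lt_of_neg hL (by linarith)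
  have h1q : 0 < 1 - q := by linarith
  have h1r : 0 < 1 - r := by linarith
  have hKb : (1:ℝ) ≤ K ^ b := by
    calc (1:ℝ) = 1 ^ b := (Real.one_rpow b).symm
    _ ≤ K ^ b := Real.rpow_le_rpow zero_le_one hK hb
  -- helper: (x^n)^b = (x^b)^n for x ≥ 0
  have hpow : ∀ x : ℝ, 0 ≤ x → ∀ n : ℕ, (x ^ n) ^ b = (x ^ b) ^ n := by
    intro x hx n
    rw [← Real.rpow_natCast x n, ← Real.rpow_natCast (x ^ b) n, ← Real.rpow_mul hx,
      mul_comm, Real.rpow_mul hx]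
  -- helper: L^(u + v*n) = L^u * (L^v)^n
  have hLpow : ∀ (v : ℝ) (n : ℕ) (u : ℝ), L ^ (u + v * (n:ℝ)) = L ^ u * (L ^ v) ^ n := by
    intro v n u
    rw [Real.rpow_add hL0, Real.rpow_mul hL0.le, Real.rpow_natCast]
  clear_value q r
  refine ⟨K ^ b * ((1 - q)⁻¹ + (1 - r)⁻¹),
    mul_pos (lt_of_lt_of_le one_pos hKb)
      (add_pos (inv_pos.mpr h1q) (inv_pos.mpr h1r)), ?_⟩
  intro jm g hg hrec hKg
  have hgjm : 0 < g jm := by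
    rcases Nat.eq_zero_or_pos jm with h | h
    · subst h
      have h1 := hg 1 le_rfl
      have h2 := hKg 1 (by omega)
      nlinarith
    · exact hg jm h
  have key : ∀ n k, 1 ≤ k → g k ≤ (1 + δ) ^ n * g (k + n) := by
    intro n
    induction n with
    | zero => intro k hk; simp
    | succ n ih =>
      intro k hk
      calc g k ≤ (1 + δ) ^ n * g (k + n) := ih k hk
      _ ≤ (1 + δ) ^ n * ((1 + δ) * g (k + n + 1)) := by
          have := hrec (k + n) (by omega)
          have hp : (0:ℝ) ≤ (1 + δ) ^ n := by positivity
          nlinarith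
      _ = (1 + δ) ^ (n + 1) * g (k + (n + 1)) := by
          rw [show k + (n + 1) = k + n + 1 from rfl]; ring
  set D : ℝ := L ^ (a * (jm:ℝ)) * g jm ^ b with hDdef
  have hD0 : 0 < D := mul_pos (Real.rpow_pos_of_pos hL0 _) (Real.rpow_pos_of_pos hgjm b)
  set f : ℕ → ℝ := fun j => q ^ (jm - (j + 1)) * r ^ ((j + 1) - jm) with hfdef
  clear_value D
  have hf0 : ∀ j, 0 ≤ f j := fun j =>
    mul_nonneg (pow_nonneg hq0.le _) (pow_nonneg hr0.le _)
  clear_value f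
  have hfshift : ∀ n, f (n + jm) = r ^ (n + 1) := by
    intro n
    simp only [hfdef]
    rw [show jm - (n + jm + 1) = 0 from by omega, show (n + jm + 1) - jm = n + 1 from by omega,
      pow_zero, one_mul]
  have hfsum : Summable f := by
    apply (summable_nat_add_iff jm).mp
    apply Summable.congr ((summable_geometric_of_lt_one hr0.le hr1).mul_right r)
    intro n
    rw [hfshift n, pow_succ]
  have hterm : ∀ j : ℕ,
      L ^ (a * ((j : ℝ) + 1) - 2 * s * max (((j : ℝ) + 1) - (jm : ℝ)) 0) * g (j + 1) ^ b
        ≤ D * K ^ b * f j := by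
    intro j
    rcases le_or_gt (j + 1) jm with h | h
    · obtain ⟨n, hn⟩ : ∃ n, jm = (j + 1) + n := ⟨jm - (j + 1), by omega⟩
      have hfj : f j = q ^ n := by
        simp only [hfdef]
        rw [show jm - (j + 1) = n from by omega, show (j + 1) - jm = 0 from by omega,
          pow_zero, mul_one]
      have hmax : max (((j:ℝ) + 1) - (jm:ℝ)) 0 = 0 := by
        apply max_eq_right
        have : ((j:ℝ) + 1) ≤ (jm:ℝ) := by exact_mod_cast h
        linarith
      rw [hmax, mul_zero, sub_zero, hfj]
      have hgle : g (j + 1) ≤ (1 + δ) ^ n * g jm := by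
        rw [hn]; exact key n (j + 1) (by omega)
      have hgb : g (j + 1) ^ b ≤ ((1 + δ) ^ b) ^ n * g jm ^ b := by
        calc g (j + 1) ^ b ≤ ((1 + δ) ^ n * g jm) ^ b :=
            Real.rpow_le_rpow (hg (j + 1) (by omega)).le hgle hb
        _ = ((1 + δ) ^ n) ^ b * g jm ^ b := Real.mul_rpow (by positivity) hgjm.le
        _ = ((1 + δ) ^ b) ^ n * g jm ^ b := by rw [hpow (1 + δ) hδ1.le n]
      have hL1 : L ^ (a * ((j:ℝ) + 1)) = L ^ (a * (jm:ℝ)) * (L ^ (-a)) ^ n := by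
        rw [← hLpow (-a) n (a * (jm:ℝ))]
        congr 1
        have hc : (jm:ℝ) = (j:ℝ) + 1 + (n:ℝ) := by rw [hn]; push_cast; ring
        rw [hc]; ring
      have hqn : q ^ n = ((1 + δ) ^ b) ^ n * (L ^ (-a)) ^ n := by
        rw [hqdef, mul_pow]
      calc L ^ (a * ((j:ℝ) + 1)) * g (j + 1) ^ b
          ≤ L ^ (a * ((j:ℝ) + 1)) * (((1 + δ) ^ b) ^ n * g jm ^ b) :=
            mul_le_mul_of_nonneg_left hgb (Real.rpow_pos_of_pos hL0 _).le
        _ = D * q ^ n := by rw [hL1, hqn, hDdef]; ring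
        _ ≤ D * K ^ b * q ^ n := by
            have h1 : 0 ≤ D * q ^ n := mul_nonneg hD0.le (pow_nonneg hq0.le n)
            nlinarith
    · obtain ⟨n, hn⟩ : ∃ n, j + 1 = jm + n := ⟨(j + 1) - jm, by omega⟩
      have hfj : f j = r ^ n := by
        simp only [hfdef]
        rw [show jm - (j + 1) = 0 from by omega, show (j + 1) - jm = n from by omega,
          pow_zero, one_mul]
      have hmax : max (((j:ℝ) + 1) - (jm:ℝ)) 0 = ((j:ℝ) + 1) - (jm:ℝ) := by
        apply max_eq_left
        have : (jm:ℝ) ≤ ((j:ℝ) + 1) := by exact_mod_cast h.le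
        linarith
      rw [hmax, hfj]
      have hc : ((j:ℝ) + 1) = (jm:ℝ) + (n:ℝ) := by exact_mod_cast hn
      have hexp : a * ((j:ℝ) + 1) - 2 * s * (((j:ℝ) + 1) - (jm:ℝ))
          = a * (jm:ℝ) + (a - 2 * s) * (n:ℝ) := by rw [hc]; ring
      rw [hexp, hLpow (a - 2 * s) n (a * (jm:ℝ)), ← hrdef]
      have hgb : g (j + 1) ^ b ≤ K ^ b * g jm ^ b := by
        calc g (j + 1) ^ b ≤ (K * g jm) ^ b :=
            Real.rpow_le_rpow (hg (j + 1) (by omega)).le (hKg (j + 1) (by omega)) hb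
        _ = K ^ b * g jm ^ b := Real.mul_rpow hK0.le hgjm.le
      calc L ^ (a * (jm:ℝ)) * r ^ n * g (j + 1) ^ b
          ≤ L ^ (a * (jm:ℝ)) * r ^ n * (K ^ b * g jm ^ b) := by
            exact mul_le_mul_of_nonneg_left hgb
              (mul_nonneg (Real.rpow_pos_of_pos hL0 _).le (pow_nonneg hr0.le n))
        _ = D * K ^ b * r ^ n := by rw [hDdef]; ring
  have htnn : ∀ j : ℕ, 0 ≤
      L ^ (a * ((j : ℝ) + 1) - 2 * s * max (((j : ℝ) + 1) - (jm : ℝ)) 0) * g (j + 1) ^ b := by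
    intro j
    have := hg (j + 1) (by omega)
    positivity
  have hsumC : Summable (fun j : ℕ => D * K ^ b * f j) := hfsum.mul_left _
  have hsum : Summable (fun j : ℕ =>
      L ^ (a * ((j : ℝ) + 1) - 2 * s * max (((j : ℝ) + 1) - (jm : ℝ)) 0) * g (j + 1) ^ b) :=
    Summable.of_nonneg_of_le htnn hterm hsumC
  refine ⟨hsum, ?_⟩
  have htf : ∑' j, f j ≤ (1 - q)⁻¹ + (1 - r)⁻¹ := by
    rw [← Summable.sum_add_tsum_nat_add jm hfsum]
    apply add_le_add
    · have hre : ∀ i ∈ Finset.range jm, f i = q ^ (jm - 1 - i) := by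
        intro i hi
        rw [Finset.mem_range] at hi
        simp only [hfdef]
        rw [show (i + 1) - jm = 0 from by omega, pow_zero, mul_one,
          show jm - (i + 1) = jm - 1 - i from by omega]
      rw [Finset.sum_congr rfl hre, Finset.sum_range_reflect (fun i => q ^ i) jm]
      calc ∑ i ∈ Finset.range jm, q ^ i ≤ ∑' i, q ^ i :=
          Summable.sum_le_tsum _ (fun i _ => pow_nonneg hq0.le i) (summable_geometric_of_lt_one hq0.le hq1)
      _ = (1 - q)⁻¹ := tsum_geometric_of_lt_one hq0.le hq1
    · have h1 : ∑' n, f (n + jm) ≤ ∑' n : ℕ, r ^ n := by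
        have h2 := (summable_nat_add_iff (f := f) jm).mpr hfsum
        refine Summable.tsum_le_tsum (fun n => ?_) h2 (summable_geometric_of_lt_one hr0.le hr1)
        rw [hfshift n]
        exact pow_le_pow_of_le_one hr0.le hr1.le (by omega)
      exact h1.trans (le_of_eq (tsum_geometric_of_lt_one hr0.le hr1))
  calc (∑' j : ℕ,
        L ^ (a * ((j : ℝ) + 1) - 2 * s * max (((j : ℝ) + 1) - (jm : ℝ)) 0) * g (j + 1) ^ b)
      ≤ ∑' j : ℕ, D * K ^ b * f j := Summable.tsum_le_tsum hterm hsum hsumC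
    _ = D * K ^ b * ∑' j, f j := tsum_mul_left
    _ ≤ D * K ^ b * ((1 - q)⁻¹ + (1 - r)⁻¹) := by
        exact mul_le_mul_of_nonneg_left htf
          (mul_nonneg hD0.le (Real.rpow_pos_of_pos hK0 b).le)
    _ = K ^ b * ((1 - q)⁻¹ + (1 - r)⁻¹) * L ^ (a * (jm:ℝ)) * g jm ^ b := by
        rw [hDdef]; ring
end

section
/- Fix integers d ≥ 1, n ≥ 1, L ≥ 2 and p_Φ ≥ 1, reals ℓ_0 > 0 and s > 1, and a mass scale j_m ∈ ℕ, and set ℓ_j = ℓ_0 L^{−j − s(j − j_m)_+}. Let q > 0 satisfy q L^{2 − 2s} ≤ 1. Then for every integer j ≥ j_m and every field φ: ℤ^d → ℝ^n, q · ‖φ‖²_{Φ_j(ℓ_j)} ≤ L^{−4} · ‖φ‖²_{Φ_{j+1}(ℓ_{j+1})} (as an inequality in [0,∞]). (This is the key inequality showing that, above the mass scale, any fixed power of the fluctuation-field regulator at scale j is dominated by the regulator at scale j+1.) -/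
open scoped ENNReal

/-- Forward discrete difference `(∇^{e_i} f)_x = f_{x+e_i} - f_x` on `ℤ^d`. -/
def fdiff {d : ℕ} {V : Type*} [AddCommGroup V] (i : Fin d)
    (f : (Fin d → ℤ) → V) : (Fin d → ℤ) → V :=
  fun x => f (x + Pi.single i 1) - f x

/-- Iterated forward differences along a list of directions. -/
def fdiffList {d : ℕ} {V : Type*} [AddCommGroup V] (l : List (Fin d))
    (f : (Fin d → ℤ) → V) : (Fin d → ℤ) → V :=
  l.foldr fdiff f

/-- The iterated forward difference `∇^α = ∏ᵢ (∇^{e_i})^{α_i}` for a multi-index `α`. -/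
def nabla {d : ℕ} {V : Type*} [AddCommGroup V] (α : Fin d → ℕ)
    (f : (Fin d → ℤ) → V) : (Fin d → ℤ) → V :=
  fdiffList ((List.finRange d).flatMap fun i => List.replicate (α i) i) f

/-- The `Φ_j(ℓ)` norm of a field `φ : ℤ^d → ℝ^n`, valued in `[0,∞]`:
`‖φ‖ = ℓ⁻¹ sup_x sup_{|α|₁ ≤ p_Φ} L^{j|α|₁} |∇^α φ_x|`. -/
noncomputable def PhiNorm (d n L pPhi j : ℕ) (ℓ : ℝ)
    (φ : (Fin d → ℤ) → EuclideanSpace ℝ (Fin n)) : ℝ≥0∞ :=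
  ⨆ (x : Fin d → ℤ) (α : {a : Fin d → ℕ // ∑ i, a i ≤ pPhi}),
    ENNReal.ofReal (ℓ⁻¹ * (L : ℝ) ^ (j * ∑ i, α.1 i) * ‖nabla α.1 φ x‖)

/-- The norm parameter `ℓ_j = ℓ_0 L^{-j - s (j - j_m)_+}`. -/
noncomputable def ellParam (ℓ0 : ℝ) (L : ℕ) (s : ℝ) (jm j : ℕ) : ℝ :=
  ℓ0 * (L : ℝ) ^ (-(j : ℝ) - s * max ((j : ℝ) - (jm : ℝ)) 0)

lemma phiNorm_step (d n L pPhi : ℕ) (hL : 2 ≤ L) (ℓ0 s : ℝ) (hℓ0 : 0 < ℓ0)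
    (_hs0 : 0 ≤ s) (jm j : ℕ) (hj : jm ≤ j)
    (φ : (Fin d → ℤ) → EuclideanSpace ℝ (Fin n)) :
    PhiNorm d n L pPhi j (ellParam ℓ0 L s jm j) φ ≤
      ENNReal.ofReal ((L : ℝ) ^ (-(1 + s))) *
        PhiNorm d n L pPhi (j + 1) (ellParam ℓ0 L s jm (j + 1)) φ := by
  have hLpos : (0 : ℝ) < L := by positivity
  have hL1 : (1 : ℝ) ≤ L := by exact_mod_cast Nat.one_le_of_lt hL
  have hjm : (0 : ℝ) ≤ (j : ℝ) - jm := sub_nonneg.mpr (Nat.cast_le.mpr hj)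
  have h1 : ellParam ℓ0 L s jm j = (L : ℝ) ^ ((1 : ℝ) + s) * ellParam ℓ0 L s jm (j + 1) := by
    unfold ellParam
    rw [max_eq_left hjm, max_eq_left (by push_cast; linarith),
      mul_comm ((L : ℝ) ^ ((1 : ℝ) + s)), mul_assoc, ← Real.rpow_add hLpos]
    congr 2
    push_cast; ring
  have hep : 0 < ellParam ℓ0 L s jm (j + 1) := by
    unfold ellParam; positivity
  apply iSup₂_le
  intro x α
  have hreal : (ellParam ℓ0 L s jm j)⁻¹ * (L : ℝ) ^ (j * ∑ i, α.1 i) * ‖nabla α.1 φ x‖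
      ≤ (L : ℝ) ^ (-(1 + s)) *
        ((ellParam ℓ0 L s jm (j + 1))⁻¹ * (L : ℝ) ^ ((j + 1) * ∑ i, α.1 i) *
          ‖nabla α.1 φ x‖) := by
    rw [h1, mul_inv, Real.rpow_neg hLpos.le]
    have hpow : (L : ℝ) ^ (j * ∑ i, α.1 i) ≤ (L : ℝ) ^ ((j + 1) * ∑ i, α.1 i) :=
      pow_le_pow_right₀ hL1 (Nat.mul_le_mul_right _ (Nat.le_succ j))
    have h0 : (0 : ℝ) ≤ ((L : ℝ) ^ ((1 : ℝ) + s))⁻¹ * (ellParam ℓ0 L s jm (j + 1))⁻¹ := by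
      positivity
    nlinarith [norm_nonneg (nabla α.1 φ x), mul_le_mul_of_nonneg_left hpow h0,
      mul_le_mul_of_nonneg_right (mul_le_mul_of_nonneg_left hpow h0)
        (norm_nonneg (nabla α.1 φ x))]
  calc ENNReal.ofReal ((ellParam ℓ0 L s jm j)⁻¹ * (L : ℝ) ^ (j * ∑ i, α.1 i) *
        ‖nabla α.1 φ x‖)
      ≤ ENNReal.ofReal ((L : ℝ) ^ (-(1 + s)) *
          ((ellParam ℓ0 L s jm (j + 1))⁻¹ * (L : ℝ) ^ ((j + 1) * ∑ i, α.1 i) *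
            ‖nabla α.1 φ x‖)) := ENNReal.ofReal_le_ofReal hreal
    _ = ENNReal.ofReal ((L : ℝ) ^ (-(1 + s))) *
          ENNReal.ofReal ((ellParam ℓ0 L s jm (j + 1))⁻¹ *
            (L : ℝ) ^ ((j + 1) * ∑ i, α.1 i) * ‖nabla α.1 φ x‖) :=
        ENNReal.ofReal_mul (by positivity)
    _ ≤ ENNReal.ofReal ((L : ℝ) ^ (-(1 + s))) *
          PhiNorm d n L pPhi (j + 1) (ellParam ℓ0 L s jm (j + 1)) φ := by
        gcongr
        exact le_iSup₂ (f := fun x (α : {a : Fin d → ℕ // ∑ i, a i ≤ pPhi}) =>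
          ENNReal.ofReal ((ellParam ℓ0 L s jm (j + 1))⁻¹ *
            (L : ℝ) ^ ((j + 1) * ∑ i, α.1 i) * ‖nabla α.1 φ x‖)) x α

/-- Above the mass scale, any fixed multiple of the squared `Φ_j(ℓ_j)` norm is
dominated by `L^{-4}` times the squared `Φ_{j+1}(ℓ_{j+1})` norm:
`q ‖φ‖²_{Φ_j(ℓ_j)} ≤ L^{-4} ‖φ‖²_{Φ_{j+1}(ℓ_{j+1})}` when `q L^{2-2s} ≤ 1`. -/
theorem PhiNorm_sq_contraction_above_mass_scale (d n L pPhi : ℕ) (hd : 1 ≤ d) (hn : 1 ≤ n)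
    (hL : 2 ≤ L) (hpPhi : 1 ≤ pPhi) (ℓ0 s : ℝ) (hℓ0 : 0 < ℓ0) (hs : 1 < s)
    (jm : ℕ) (q : ℝ) (hq : 0 < q) (hqL : q * (L : ℝ) ^ (2 - 2 * s) ≤ 1)
    (j : ℕ) (hj : jm ≤ j) (φ : (Fin d → ℤ) → EuclideanSpace ℝ (Fin n)) :
    ENNReal.ofReal q * (PhiNorm d n L pPhi j (ellParam ℓ0 L s jm j) φ) ^ 2
      ≤ ENNReal.ofReal ((L : ℝ) ^ (-4 : ℝ)) *
          (PhiNorm d n L pPhi (j + 1) (ellParam ℓ0 L s jm (j + 1)) φ) ^ 2 := by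
  have hLpos : (0 : ℝ) < L := by positivity
  have hc : (0 : ℝ) ≤ (L : ℝ) ^ (-(1 + s)) := Real.rpow_nonneg hLpos.le _
  have hstep := phiNorm_step d n L pPhi hL ℓ0 s hℓ0 (by linarith) jm j hj φ
  have hcsq : q * ((L : ℝ) ^ (-(1 + s))) ^ 2 ≤ (L : ℝ) ^ (-4 : ℝ) := by
    have h2 : ((L : ℝ) ^ (-(1 + s))) ^ 2 = (L : ℝ) ^ (2 - 2 * s) * (L : ℝ) ^ (-4 : ℝ) := by
      rw [sq, ← Real.rpow_add hLpos, ← Real.rpow_add hLpos]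
      ring_nf
    rw [h2, ← mul_assoc]
    have h4 : (0 : ℝ) ≤ (L : ℝ) ^ (-4 : ℝ) := Real.rpow_nonneg hLpos.le _
    nlinarith
  calc ENNReal.ofReal q * (PhiNorm d n L pPhi j (ellParam ℓ0 L s jm j) φ) ^ 2
      ≤ ENNReal.ofReal q * (ENNReal.ofReal ((L : ℝ) ^ (-(1 + s))) *
          PhiNorm d n L pPhi (j + 1) (ellParam ℓ0 L s jm (j + 1)) φ) ^ 2 := by
        gcongr
    _ = ENNReal.ofReal (q * ((L : ℝ) ^ (-(1 + s))) ^ 2) *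
          (PhiNorm d n L pPhi (j + 1) (ellParam ℓ0 L s jm (j + 1)) φ) ^ 2 := by
        rw [mul_pow, ← ENNReal.ofReal_pow hc, ← mul_assoc, ← ENNReal.ofReal_mul hq.le]
    _ ≤ ENNReal.ofReal ((L : ℝ) ^ (-4 : ℝ)) *
          (PhiNorm d n L pPhi (j + 1) (ellParam ℓ0 L s jm (j + 1)) φ) ^ 2 := by
        gcongr
end
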